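/- Clebsch–Gordan rule for the infinite dicyclic group: for every k ≥ 2 there is an isomorphism of Dic∞-representations V_k ⊗ V ≅ V_{k+1} ⊕ V_{k-1}. -/

import Mathlib

open scoped TensorProduct
open Matrix

noncomputable section

/-- `ℂ²`, the standard two-dimensional complex vector space. -/
abbrev V2 : Type := Fin 2 → ℂ

/-- The standard representation of a subgroup `G ≤ GL₂(ℂ)` on `ℂ²`, by matrix-vector
multiplication. -/
def stdRep (G : Subgroup (GL (Fin 2) ℂ)) : Representation ℂ G V2 where
  toFun g := Matrix.toLin' ((g : GL (Fin 2) ℂ) : Matrix (Fin 2) (Fin 2) ℂ)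
  map_one' := by
    simp only [OneMemClass.coe_one, Units.val_one, Matrix.toLin'_one]
    rfl
  map_mul' g h := by
    simp only [MulMemClass.coe_mul, Units.val_mul, Matrix.toLin'_mul]
    rfl

/-- `TPow j` is the `(j+1)`-st tensor power `V^{⊗(j+1)}` of `V = ℂ²`, realized as an
iterated binary tensor product (bundled as an object of `ModuleCat ℂ` so that the
recursion carries its module structure). -/
def TPow : ℕ → ModuleCat ℂ
  | 0 => ModuleCat.of ℂ V2
  | (j + 1) => ModuleCat.of ℂ (TPow j ⊗[ℂ] V2)

/-- The diagonal representation of `G ≤ GL₂(ℂ)` on `TPow j = V^{⊗(j+1)}`. -/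
def TPowRep (G : Subgroup (GL (Fin 2) ℂ)) : (j : ℕ) → Representation ℂ G (TPow j)
  | 0 => stdRep G
  | (j + 1) => (TPowRep G j).tprod (stdRep G)

/-- The basis vector `v_s^{⊗(j+1)}` of `TPow j = V^{⊗(j+1)}`, for `s : Fin 2`. -/
def vpow (s : Fin 2) : (j : ℕ) → TPow j
  | 0 => Pi.single s 1
  | (j + 1) => vpow s j ⊗ₜ[ℂ] Pi.single s 1

/-- The subspace `V_{j+1}` of `V^{⊗(j+1)}` spanned by `v₁^{⊗(j+1)}` and `v₂^{⊗(j+1)}`. -/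
def Vsub (j : ℕ) : Submodule ℂ (TPow j) := Submodule.span ℂ {vpow 0 j, vpow 1 j}


/-!
Every element of `Dic∞ = ⟨x, a⟩` is a monomial matrix of determinant one: it sends each standard
basis vector `v_s` to a multiple `c_s v_{σ s}` for a permutation `σ`, and the generators have this
form. The isomorphism `V_k ⊗ V → V_{k+1} × V_{k-1}` sends `v_s^{⊗k} ⊗ v_t` to
`(δ_{st} v_s^{⊗(k+1)}, ω(v_s, v_t) v_s^{⊗(k-1)})`, where `ω(v, w) = v₀ w₁ - v₁ w₀` is the
determinant form. Its first component is the restriction of the coordinate projection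
`V^{⊗(k+1)} → V_{k+1}`, which commutes with every monomial matrix; its second is the restriction of
the contraction of the last two tensor factors against `ω`, which commutes with every matrix of
determinant one. It hits every vector of the standard basis of `V_{k+1} × V_{k-1}` up to sign, and
both sides have dimension four.
-/

section Monomial

variable {n : Type*} [Fintype n] [DecidableEq n]

lemma mulVec_apply_perm_of_monomial {R : Type*} [CommSemiring R] {M : Matrix n n R}
    {σ : Equiv.Perm n} {c : n → R} (hM : ∀ s, M *ᵥ Pi.single s 1 = c s • Pi.single (σ s) 1)
    (x : n → R) (s : n) :
    (M *ᵥ x) (σ s) = c s * x s := by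
  have hcol : ∀ r, M (σ s) r = c r * (Pi.single (σ r) 1 : n → R) (σ s) := fun r => by
    simpa using congrFun (hM r) (σ s)
  simp [Matrix.mulVec, dotProduct, hcol, Pi.single_apply, σ.injective.eq_iff]

variable (n) (K : Type*) [Field K]

def monomialSubgroup : Subgroup (GL n K) where
  carrier := {g | ∃ (σ : Equiv.Perm n) (c : n → K),
    ∀ s, (g : Matrix n n K) *ᵥ Pi.single s 1 = c s • Pi.single (σ s) 1}
  one_mem' := ⟨1, 1, fun s => by rw [Units.val_one, Matrix.one_mulVec]; simp⟩
  mul_mem' := by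
    rintro g h ⟨σ, c, hg⟩ ⟨τ, d, hh⟩
    refine ⟨σ * τ, fun s => d s * c (τ s), fun s => ?_⟩
    rw [Units.val_mul, ← Matrix.mulVec_mulVec, hh, Matrix.mulVec_smul, hg, smul_smul]
    rfl
  inv_mem' := by
    rintro g ⟨σ, c, hg⟩
    refine ⟨σ⁻¹, fun t => (c (σ⁻¹ t))⁻¹, fun t => ?_⟩
    obtain ⟨s, rfl⟩ := σ.surjective t
    have hinv : c s • ((g⁻¹ : GL n K) : Matrix n n K) *ᵥ Pi.single (σ s) 1 = Pi.single s 1 := by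
      rw [← Matrix.mulVec_smul, ← hg, Matrix.mulVec_mulVec, ← Units.val_mul, inv_mul_cancel,
        Units.val_one, Matrix.one_mulVec]
    have hc : c s ≠ 0 := by
      rintro hc
      simpa [hc] using congrFun hinv s
    simp [← hinv, smul_smul, hc]

end Monomial

lemma closure_le_monomialSubgroup_inf_ker_det {X A : GL (Fin 2) ℂ} {z w : ℂ}
    (hX : (X : Matrix (Fin 2) (Fin 2) ℂ) = !![0, -1; 1, 0])
    (hA : (A : Matrix (Fin 2) (Fin 2) ℂ) = !![z, 0; 0, w]) (hzw : z * w = 1) :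
    Subgroup.closure {X, A} ≤ monomialSubgroup (Fin 2) ℂ ⊓ Matrix.GeneralLinearGroup.det.ker := by
  rw [Subgroup.closure_le, Set.insert_subset_iff, Set.singleton_subset_iff]
  refine ⟨⟨⟨Equiv.swap 0 1, ![1, -1], fun s => ?_⟩, ?_⟩, ⟨⟨1, ![z, w], fun s => ?_⟩, ?_⟩⟩
  · fin_cases s <;> ext i <;> fin_cases i <;> simp [hX]
  · simp [Units.ext_iff, hX, Matrix.det_fin_two]
  · fin_cases s <;> ext i <;> fin_cases i <;> simp [hA]
  · simp [Units.ext_iff, hA, Matrix.det_fin_two, hzw]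

section DetForm

variable (R : Type*) [CommRing R]

def detForm : (Fin 2 → R) →ₗ[R] (Fin 2 → R) →ₗ[R] R :=
  (LinearMap.mul R R).compl₁₂ (LinearMap.proj 0) (LinearMap.proj 1) -
    (LinearMap.mul R R).compl₁₂ (LinearMap.proj 1) (LinearMap.proj 0)

variable {R}

lemma detForm_apply (v w : Fin 2 → R) : detForm R v w = v 0 * w 1 - v 1 * w 0 := rfl

lemma detForm_mulVec (M : Matrix (Fin 2) (Fin 2) R) (v w : Fin 2 → R) :
    detForm R (M *ᵥ v) (M *ᵥ w) = M.det * detForm R v w := by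
  simp only [detForm_apply, Matrix.mulVec, dotProduct, Fin.sum_univ_two, Matrix.det_fin_two]
  ring

end DetForm

namespace TPow

def coord (s : Fin 2) : (j : ℕ) → TPow j →ₗ[ℂ] ℂ
  | 0 => LinearMap.proj s
  | j + 1 => TensorProduct.lift (((LinearMap.mul ℂ ℂ).comp (coord s j)).compl₂ (LinearMap.proj s))

lemma coord_tmul (s : Fin 2) (j : ℕ) (a : TPow j) (v : V2) :
    coord s (j + 1) (a ⊗ₜ[ℂ] v) = coord s j a * v s := rfl

lemma coord_vpow (s t : Fin 2) (j : ℕ) : coord s j (vpow t j) = if t = s then 1 else 0 := by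
  induction j with
  | zero => exact Pi.single_apply t 1 s |>.trans (if_congr eq_comm rfl rfl)
  | succ j ih =>
    rw [vpow, coord_tmul, ih, Pi.single_apply]
    by_cases h : t = s <;> simp [h]

lemma linearIndependent_vpow (j : ℕ) : LinearIndependent ℂ (vpow · j) := by
  refine Fintype.linearIndependent_iff.2 fun a ha s => ?_
  simpa only [map_sum, map_smul, coord_vpow, smul_eq_mul, mul_ite, mul_one, mul_zero,
    Finset.sum_ite_eq', Finset.mem_univ, if_true, map_zero] using congrArg (coord s j) ha

def contract (j : ℕ) : TPow (j + 1) ⊗[ℂ] V2 →ₗ[ℂ] TPow j :=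
  (TensorProduct.rid ℂ (TPow j)).toLinearMap ∘ₗ
    TensorProduct.map LinearMap.id (TensorProduct.lift (detForm ℂ)) ∘ₗ
    (TensorProduct.assoc ℂ (TPow j) V2 V2).toLinearMap

lemma contract_tmul (j : ℕ) (a : TPow j) (v w : V2) :
    contract j ((a ⊗ₜ[ℂ] v) ⊗ₜ[ℂ] w) = detForm ℂ v w • a := rfl

lemma contract_vpow_tmul (s : Fin 2) (j : ℕ) (v : V2) :
    contract j (vpow s (j + 1) ⊗ₜ[ℂ] v) = detForm ℂ (Pi.single s 1) v • vpow s j := rfl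

end TPow

open TPow

namespace Vsub

lemma span_range_vpow (j : ℕ) : Submodule.span ℂ (Set.range (vpow · j)) = Vsub j := by
  rw [Vsub]
  congr 1
  ext
  simp [Fin.exists_fin_two, eq_comm]

def basis (j : ℕ) : Module.Basis (Fin 2) ℂ (Vsub j) :=
  (Module.Basis.span (linearIndependent_vpow j)).map (LinearEquiv.ofEq _ _ (span_range_vpow j))

@[simp] lemma coe_basis (j : ℕ) (s : Fin 2) : (basis j s : TPow j) = vpow s j := by
  simp [basis, Module.Basis.span_apply]

lemma vpow_mem (s : Fin 2) (j : ℕ) : vpow s j ∈ Vsub j :=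
  coe_basis j s ▸ (basis j s).2

instance (j : ℕ) : FiniteDimensional ℂ (Vsub j) := .of_basis (basis j)

lemma finrank_eq (j : ℕ) : Module.finrank ℂ (Vsub j) = 2 := by
  simp [Module.finrank_eq_card_basis (basis j)]

def proj (j : ℕ) : TPow j →ₗ[ℂ] Vsub j :=
  ∑ s, LinearMap.toSpanSingleton ℂ _ (basis j s) ∘ₗ coord s j

lemma coe_proj (j : ℕ) (x : TPow j) : (proj j x : TPow j) = ∑ s, coord s j x • vpow s j := by
  simp [proj]

lemma proj_vpow (s : Fin 2) (j : ℕ) : proj j (vpow s j) = basis j s := by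
  ext
  simp [coe_proj, coord_vpow]

lemma proj_vpow_tmul_of_ne {s t : Fin 2} (h : s ≠ t) (j : ℕ) :
    proj (j + 1) (vpow s j ⊗ₜ[ℂ] Pi.single t 1) = 0 := by
  ext
  refine (coe_proj (j + 1) _).trans (Finset.sum_eq_zero fun r _ => ?_)
  rw [coord_tmul, coord_vpow, Pi.single_apply]
  by_cases hr : s = r
  · subst hr
    simp [h]
  · simp [hr]

lemma contract_mem (j : ℕ) (w : Vsub (j + 1) ⊗[ℂ] V2) :
    TPow.contract j (TensorProduct.map (Vsub (j + 1)).subtype LinearMap.id w) ∈ Vsub j := by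
  induction w using TensorProduct.induction_on with
  | zero => simp
  | tmul u v =>
    suffices Vsub (j + 1) ≤ (Vsub j).comap (TPow.contract j ∘ₗ (TensorProduct.mk ℂ _ V2).flip v) from
      this u.2
    rw [Vsub, Submodule.span_le]
    rintro _ (rfl | rfl) <;>
      exact Submodule.smul_mem _ _ (vpow_mem _ _)
  | add x y hx hy => simpa only [map_add] using add_mem hx hy

def contract (j : ℕ) : Vsub (j + 1) ⊗[ℂ] V2 →ₗ[ℂ] Vsub j :=
  (TPow.contract j ∘ₗ TensorProduct.map (Vsub (j + 1)).subtype LinearMap.id).codRestrict _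
    (contract_mem j)

end Vsub

section Equivariance

variable {G : Subgroup (GL (Fin 2) ℂ)} (g : G)

lemma stdRep_apply (v : V2) :
    stdRep G g v = ((g : GL (Fin 2) ℂ) : Matrix (Fin 2) (Fin 2) ℂ) *ᵥ v :=
  rfl

lemma TPowRep_succ_tmul (j : ℕ) (a : TPow j) (v : V2) :
    TPowRep G (j + 1) g (a ⊗ₜ[ℂ] v) = TPowRep G j g a ⊗ₜ[ℂ] stdRep G g v := rfl

variable {g}

lemma contract_TPowRep (hg : ((g : GL (Fin 2) ℂ) : Matrix (Fin 2) (Fin 2) ℂ).det = 1) (j : ℕ)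
    (x : TPow (j + 1) ⊗[ℂ] V2) :
    contract j ((TPowRep G (j + 1)).tprod (stdRep G) g x) = TPowRep G j g (contract j x) := by
  suffices contract j ∘ₗ (TPowRep G (j + 1)).tprod (stdRep G) g = TPowRep G j g ∘ₗ contract j from
    LinearMap.congr_fun this x
  refine TensorProduct.ext_threefold fun a v w => ?_
  change contract j ((TPowRep G j g a ⊗ₜ[ℂ] stdRep G g v) ⊗ₜ[ℂ] stdRep G g w) =
    TPowRep G j g (contract j ((a ⊗ₜ[ℂ] v) ⊗ₜ[ℂ] w))
  rw [contract_tmul, contract_tmul, stdRep_apply, stdRep_apply, detForm_mulVec, hg, one_mul,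
    map_smul]

variable {σ : Equiv.Perm (Fin 2)} {c : Fin 2 → ℂ}
  (hg : ∀ s, stdRep G g (Pi.single s 1) = c s • Pi.single (σ s) 1)
include hg

lemma TPowRep_vpow (s : Fin 2) (j : ℕ) :
    TPowRep G j g (vpow s j) = c s ^ (j + 1) • vpow (σ s) j := by
  induction j with
  | zero =>
    rw [zero_add, pow_one]
    exact hg s
  | succ j ih =>
    rw [vpow, TPowRep_succ_tmul, ih, hg, TensorProduct.smul_tmul_smul, pow_succ]
    rfl

lemma coord_comp_TPowRep (s : Fin 2) (j : ℕ) :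
    coord (σ s) j ∘ₗ TPowRep G j g = c s ^ (j + 1) • coord s j := by
  have hstd := mulVec_apply_perm_of_monomial
    (M := ((g : GL (Fin 2) ℂ) : Matrix (Fin 2) (Fin 2) ℂ)) hg
  induction j with
  | zero =>
    ext x
    rw [zero_add, pow_one]
    exact hstd x s
  | succ j ih =>
    refine TensorProduct.ext' fun a v => ?_
    have ha := LinearMap.congr_fun ih a
    simp only [LinearMap.comp_apply, LinearMap.smul_apply] at ha
    change coord (σ s) (j + 1) (TPowRep G (j + 1) g (a ⊗ₜ[ℂ] v)) =
      c s ^ (j + 1 + 1) • coord s (j + 1) (a ⊗ₜ[ℂ] v)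
    rw [TPowRep_succ_tmul, coord_tmul, coord_tmul, ha, stdRep_apply, hstd, smul_eq_mul,
      smul_eq_mul, pow_succ]
    ring

lemma TPowRep_proj (j : ℕ) (x : TPow j) :
    TPowRep G j g (Vsub.proj j x) = Vsub.proj j (TPowRep G j g x) := by
  rw [Vsub.coe_proj, Vsub.coe_proj, map_sum,
    ← Equiv.sum_comp σ (fun t => coord t j (TPowRep G j g x) • vpow t j)]
  refine Finset.sum_congr rfl fun s _ => ?_
  rw [map_smul, TPowRep_vpow hg, smul_smul, ← LinearMap.comp_apply, coord_comp_TPowRep hg,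
    LinearMap.smul_apply, smul_eq_mul, mul_comm]

end Equivariance

/-- The map `V_{m+2} ⊗ V → V_{m+3} × V_{m+1}` (recall `Vsub j = V_{j+1}`). -/
def clebschGordanMap (m : ℕ) : Vsub (m + 1) ⊗[ℂ] V2 →ₗ[ℂ] Vsub (m + 2) × Vsub m :=
  (Vsub.proj (m + 2) ∘ₗ TensorProduct.map (Vsub (m + 1)).subtype LinearMap.id).prod
    (Vsub.contract m)

lemma clebschGordanMap_tmul_fst (m : ℕ) (u : Vsub (m + 1)) (v : V2) :
    (clebschGordanMap m (u ⊗ₜ[ℂ] v)).1 = Vsub.proj (m + 2) ((u : TPow (m + 1)) ⊗ₜ[ℂ] v) := rfl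

lemma clebschGordanMap_tmul_snd (m : ℕ) (u : Vsub (m + 1)) (v : V2) :
    ((clebschGordanMap m (u ⊗ₜ[ℂ] v)).2 : TPow m) = contract m ((u : TPow (m + 1)) ⊗ₜ[ℂ] v) :=
  rfl

lemma clebschGordanMap_basis_tmul_self (m : ℕ) (s : Fin 2) :
    clebschGordanMap m (Vsub.basis (m + 1) s ⊗ₜ[ℂ] Pi.single s 1) = (Vsub.basis (m + 2) s, 0) := by
  refine Prod.ext ?_ (Subtype.ext ?_)
  · rw [clebschGordanMap_tmul_fst, Vsub.coe_basis]
    exact Vsub.proj_vpow s (m + 2)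
  · rw [clebschGordanMap_tmul_snd, Vsub.coe_basis, contract_vpow_tmul]
    simp [detForm_apply, mul_comm]

lemma clebschGordanMap_basis_tmul_of_ne (m : ℕ) {s t : Fin 2} (h : s ≠ t) :
    clebschGordanMap m (Vsub.basis (m + 1) s ⊗ₜ[ℂ] Pi.single t 1) =
      (0, detForm ℂ (Pi.single s 1) (Pi.single t 1) • Vsub.basis m s) := by
  refine Prod.ext ?_ (Subtype.ext ?_)
  · rw [clebschGordanMap_tmul_fst, Vsub.coe_basis]
    exact Vsub.proj_vpow_tmul_of_ne h (m + 1)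
  · rw [clebschGordanMap_tmul_snd, Vsub.coe_basis, contract_vpow_tmul]
    simp

lemma clebschGordanMap_surjective (m : ℕ) : Function.Surjective (clebschGordanMap m) := by
  rw [← LinearMap.range_eq_top, eq_top_iff, ← ((Vsub.basis _).prod (Vsub.basis _)).span_eq,
    Submodule.span_le]
  rintro _ ⟨s | s, rfl⟩
  · exact ⟨_, by simpa using clebschGordanMap_basis_tmul_self m s⟩
  · fin_cases s
    · exact ⟨_, by simpa [detForm_apply] using clebschGordanMap_basis_tmul_of_ne m zero_ne_one⟩
    · refine ⟨-(Vsub.basis (m + 1) 1 ⊗ₜ[ℂ] Pi.single 0 1), ?_⟩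
      rw [map_neg, clebschGordanMap_basis_tmul_of_ne m one_ne_zero]
      simp [detForm_apply]

lemma finrank_Vsub_tensor_eq_finrank_prod (m : ℕ) :
    Module.finrank ℂ (Vsub (m + 1) ⊗[ℂ] V2) = Module.finrank ℂ (Vsub (m + 2) × Vsub m) := by
  simp [Module.finrank_tensorProduct, Module.finrank_prod, Vsub.finrank_eq]

def clebschGordanEquiv (m : ℕ) : (Vsub (m + 1) ⊗[ℂ] V2) ≃ₗ[ℂ] (Vsub (m + 2) × Vsub m) :=
  .ofBijective (clebschGordanMap m)
    ⟨(LinearMap.injective_iff_surjective_of_finrank_eq_finrank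
      (finrank_Vsub_tensor_eq_finrank_prod m)).2 (clebschGordanMap_surjective m),
      clebschGordanMap_surjective m⟩

theorem clebschGordan_dicyclicInf
    (θ : ℝ) (X A : GL (Fin 2) ℂ)
    (hX : (X : Matrix (Fin 2) (Fin 2) ℂ) = !![0, -1; 1, 0])
    (hA : (A : Matrix (Fin 2) (Fin 2) ℂ) =
      !![Complex.exp (θ * Complex.I), 0; 0, Complex.exp (-(θ * Complex.I))])
    (G : Subgroup (GL (Fin 2) ℂ)) (hG : G = Subgroup.closure {X, A})
    (k : ℕ) (hk : 2 ≤ k) :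
    ∃ f : (↥(Vsub (k - 1)) ⊗[ℂ] V2) ≃ₗ[ℂ] (↥(Vsub k) × ↥(Vsub (k - 2))),
      ∀ (g : G) (w w' : ↥(Vsub (k - 1)) ⊗[ℂ] V2),
        ((TPowRep G (k - 1)).tprod (stdRep G)) g
            (TensorProduct.map (Vsub (k - 1)).subtype LinearMap.id w) =
          TensorProduct.map (Vsub (k - 1)).subtype LinearMap.id w' →
        (TPowRep G k g ((f w).1 : TPow k) = ((f w').1 : TPow k) ∧
          TPowRep G (k - 2) g ((f w).2 : TPow (k - 2)) = ((f w').2 : TPow (k - 2))) := by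
  obtain ⟨m, rfl⟩ : ∃ m, k = m + 2 := ⟨k - 2, by omega⟩
  have hGle : G ≤ monomialSubgroup (Fin 2) ℂ ⊓ Matrix.GeneralLinearGroup.det.ker :=
    hG ▸ closure_le_monomialSubgroup_inf_ker_det hX hA
      (by rw [← Complex.exp_add, add_neg_cancel, Complex.exp_zero])
  refine ⟨clebschGordanEquiv m, fun g w w' hw => ?_⟩
  obtain ⟨⟨σ, c, hmon⟩, hdet⟩ := hGle g.2
  have hdet' : ((g : GL (Fin 2) ℂ) : Matrix (Fin 2) (Fin 2) ℂ).det = 1 := by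
    simpa [Units.ext_iff] using hdet
  exact ⟨(TPowRep_proj hmon (m + 2) _).trans (congrArg (Subtype.val ∘ Vsub.proj (m + 2)) hw),
    (contract_TPowRep hdet' m _).symm.trans (congrArg (contract m) hw)⟩
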